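/- arXiv:1711.01951 — 2 statements merged into one kernel-verified Lean document; each statement's English description precedes it below -/
import Mathlib

section
/- If S is a locating-dominating set of a graph G, then S is a locating-dominating set of the complement Ḡ if and only if there is no vertex u ∈ V \ S with N(u) ∩ S = S. -/
noncomputable section
open Classical

variable {V : Type*}

/-- `S` is a distinguishing set of `G`. -/
def IsDistinguishing (G : SimpleGraph V) (S : Set V) : Prop :=
  ∀ u ∉ S, ∀ v ∉ S, u ≠ v → G.neighborSet u ∩ S ≠ G.neighborSet v ∩ S

/-- `S` is a dominating set of `G`. -/
def IsDominating (G : SimpleGraph V) (S : Set V) : Prop :=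
  ∀ v ∉ S, ∃ u ∈ S, G.Adj v u

/-- `S` is a locating-dominating set of `G`. -/
def IsLD (G : SimpleGraph V) (S : Set V) : Prop :=
  IsDistinguishing G S ∧ IsDominating G S

/-- The location-domination number of `G`. -/
def ldNum (G : SimpleGraph V) : ℕ :=
  sInf {n | ∃ S : Set V, S.ncard = n ∧ IsLD G S}

/-- The graph `G^S` associated with a distinguishing set `S`:
vertices outside `S` are adjacent iff their neighborhoods in `S`
differ in exactly one vertex (the label of the edge). -/
def assocGraph (G : SimpleGraph V) (S : Set V) : SimpleGraph V where
  Adj x y := x ∉ S ∧ y ∉ S ∧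
    ∃ u, symmDiff (G.neighborSet x ∩ S) (G.neighborSet y ∩ S) = {u}
  symm := by
    constructor
    rintro x y ⟨hx, hy, u, hu⟩
    exact ⟨hy, hx, u, by rwa [symmDiff_comm]⟩
  loopless := by
    constructor
    rintro x ⟨-, -, u, hu⟩
    rw [symmDiff_self] at hu
    exact (Set.singleton_ne_empty u) (by simpa using hu.symm)

/-- The edge `e` of `G^S` has label `u`. -/
def edgeLabelIs (G : SimpleGraph V) (S : Set V) (u : V) (e : Sym2 V) : Prop :=
  Sym2.lift ⟨fun x y => symmDiff (G.neighborSet x ∩ S) (G.neighborSet y ∩ S) = {u},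
    fun x y => by simp only []; rw [symmDiff_comm]⟩ e

/-- The number of edges with label `u` in a list of edges (e.g. of a walk in `G^S`). -/
def labelCount (G : SimpleGraph V) (S : Set V) (u : V) (l : List (Sym2 V)) : ℕ :=
  l.countP fun e => decide (edgeLabelIs G S u e)

/-- No edge of `H` lies on two distinct cycles: any two cycles sharing an edge
have the same edge set.  (This says precisely that every connected component of
`H` is a cactus.) -/
def NoEdgeOnTwoCycles {α : Type*} (H : SimpleGraph α) : Prop :=
  ∀ (x y : α) (p : H.Walk x x) (q : H.Walk y y), p.IsCycle → q.IsCycle →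
    ∀ e ∈ p.edges, e ∈ q.edges → ∀ e', e' ∈ p.edges ↔ e' ∈ q.edges

/-- A cactus is a connected graph in which no edge lies on two distinct cycles. -/
def IsCactus {α : Type*} (H : SimpleGraph α) : Prop :=
  H.Connected ∧ NoEdgeOnTwoCycles H

/-- `x` and `y` are twins in `G`. -/
def Twins (G : SimpleGraph V) (x y : V) : Prop :=
  G.neighborSet x = G.neighborSet y ∨
    G.neighborSet x ∪ {x} = G.neighborSet y ∪ {y}

/-- `x` and `y` are twins in the vertex-deleted graph `G - u`. -/
def TwinsAvoid (G : SimpleGraph V) (u x y : V) : Prop :=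
  G.neighborSet x \ {u} = G.neighborSet y \ {u} ∨
    (G.neighborSet x ∪ {x}) \ {u} = (G.neighborSet y ∪ {y}) \ {u}

/-- `U, W` is a bipartition of `G` into two stable (independent) sets. -/
def BipartitionOf (G : SimpleGraph V) (U W : Set V) : Prop :=
  U ∪ W = Set.univ ∧ Disjoint U W ∧
    (∀ x ∈ U, ∀ y ∈ U, ¬ G.Adj x y) ∧ (∀ x ∈ W, ∀ y ∈ W, ¬ G.Adj x y)

/-!
For `u ∉ S`, passing from `G` to `Gᶜ` replaces the trace `N(u) ∩ S` by its relative complement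
`S \ N(u)`. Complementation within `S` is injective, so distinguishing sets of `G` and `Gᶜ`
coincide, and `u` is dominated in `Gᶜ` exactly when `S \ N(u)` is nonempty, i.e. `N(u) ∩ S ≠ S`.
-/

section

variable {G : SimpleGraph V} {S : Set V}

lemma SimpleGraph.neighborSet_compl_inter_of_notMem {u : V} (hu : u ∉ S) :
    Gᶜ.neighborSet u ∩ S = S \ G.neighborSet u := by
  ext v
  simp only [Set.mem_inter_iff, mem_neighborSet, compl_adj, Set.mem_sdiff]
  exact ⟨fun ⟨⟨_, hnadj⟩, hv⟩ => ⟨hv, hnadj⟩,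
    fun ⟨hv, hnadj⟩ => ⟨⟨fun huv => hu (huv ▸ hv), hnadj⟩, hv⟩⟩

open SimpleGraph

lemma isDistinguishing_compl_iff : IsDistinguishing Gᶜ S ↔ IsDistinguishing G S := by
  refine forall₂_congr fun u hu => forall₂_congr fun v hv => imp_congr_right fun _ => not_congr ?_
  rw [neighborSet_compl_inter_of_notMem hu, neighborSet_compl_inter_of_notMem hv,
    sdiff_eq_sdiff_iff_inf_eq_inf, Set.inter_comm (G.neighborSet u), Set.inter_comm (G.neighborSet v)]
  rfl

lemma isDominating_compl_iff :
    IsDominating Gᶜ S ↔ ∀ u ∉ S, G.neighborSet u ∩ S ≠ S := by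
  refine forall₂_congr fun u hu => ?_
  rw [Ne, Set.inter_eq_right, ← Set.sdiff_nonempty, ← neighborSet_compl_inter_of_notMem hu]
  exact ⟨fun ⟨v, hv, hadj⟩ => ⟨v, hadj, hv⟩, fun ⟨v, hadj, hv⟩ => ⟨v, hv, hadj⟩⟩

end

theorem ld_compl_iff_no_full_vertex (G : SimpleGraph V) (S : Set V)
    (h : IsLD G S) :
    IsLD Gᶜ S ↔ ∀ u ∉ S, G.neighborSet u ∩ S ≠ S := by
  rw [IsLD, isDistinguishing_compl_iff, isDominating_compl_iff]
  exact and_iff_right h.1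

end
end

section
/- Let G be a connected bipartite graph with stable sets U and W. If G has a locating-dominating set S of minimum size with S ∩ U ≠ ∅ and S ∩ W ≠ ∅, then λ(Ḡ) ≤ λ(G). -/
noncomputable section
open Classical

variable {V : Type*}

theorem SimpleGraph.compl_neighborSet_inter (G : SimpleGraph V) {S : Set V} {x : V}
    (hx : x ∉ S) : Gᶜ.neighborSet x ∩ S = S \ (G.neighborSet x ∩ S) := by
  ext y
  simp only [SimpleGraph.mem_neighborSet, SimpleGraph.compl_adj, Set.mem_inter_iff,
    Set.mem_sdiff]
  constructor
  · rintro ⟨⟨-, hnadj⟩, hy⟩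
    exact ⟨hy, fun h => hnadj h.1⟩
  · rintro ⟨hy, hnadj⟩
    exact ⟨⟨fun hxy => hx (hxy ▸ hy), fun h => hnadj ⟨h, hy⟩⟩, hy⟩

theorem IsDistinguishing.compl {G : SimpleGraph V} {S : Set V} (h : IsDistinguishing G S) :
    IsDistinguishing Gᶜ S := by
  intro u hu v hv huv heq
  apply h u hu v hv huv
  rw [G.compl_neighborSet_inter hu, G.compl_neighborSet_inter hv] at heq
  rw [← Set.sdiff_sdiff_cancel_left (Set.inter_subset_right : G.neighborSet u ∩ S ⊆ S),
    ← Set.sdiff_sdiff_cancel_left (Set.inter_subset_right : G.neighborSet v ∩ S ⊆ S), heq]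

/-- A vertex outside `S` is adjacent in `Gᶜ` to any vertex of `S` in its own part. -/
theorem BipartitionOf.isDominating_compl {G : SimpleGraph V} {U W S : Set V}
    (hbip : BipartitionOf G U W) (hU : (S ∩ U).Nonempty) (hW : (S ∩ W).Nonempty) :
    IsDominating Gᶜ S := by
  obtain ⟨hcover, -, hUind, hWind⟩ := hbip
  intro v hv
  have hvUW : v ∈ U ∪ W := hcover ▸ Set.mem_univ v
  rcases hvUW with hvU | hvW
  · obtain ⟨s, hsS, hsU⟩ := hU
    exact ⟨s, hsS, fun hvs => hv (hvs ▸ hsS), hUind v hvU s hsU⟩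
  · obtain ⟨s, hsS, hsW⟩ := hW
    exact ⟨s, hsS, fun hvs => hv (hvs ▸ hsS), hWind v hvW s hsW⟩

theorem ldNum_le_ncard {G : SimpleGraph V} {S : Set V} (h : IsLD G S) : ldNum G ≤ S.ncard :=
  Nat.sInf_le ⟨S, rfl, h⟩

theorem ld_code_both_parts_general (G : SimpleGraph V) (U W : Set V)
    (hbip : BipartitionOf G U W) (S : Set V)
    (hld : IsLD G S) (hmin : S.ncard = ldNum G)
    (hU : (S ∩ U).Nonempty) (hW : (S ∩ W).Nonempty) :
    ldNum Gᶜ ≤ ldNum G :=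
  hmin ▸ ldNum_le_ncard ⟨hld.1.compl, hbip.isDominating_compl hU hW⟩

theorem ld_code_both_parts [Fintype V] (G : SimpleGraph V) (U W : Set V)
    (hbip : BipartitionOf G U W) (hconn : G.Connected) (S : Set V)
    (hld : IsLD G S) (hmin : S.ncard = ldNum G)
    (hU : (S ∩ U).Nonempty) (hW : (S ∩ W).Nonempty) :
    ldNum Gᶜ ≤ ldNum G :=
  ld_code_both_parts_general G U W hbip S hld hmin hU hW

end
end
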